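/- Define 𝓖g(x) = ((x+3)/6)·g((x+2)/3)³ + ((x+2)/6)·(g((x+1)/3)² − g((x+2)/3)·g((x+1)/3)²). If g₁, g₂ : [0,1] → [0,1] are monotone increasing with g₁ ≥ g₂ on [0,1], then 𝓖g₁ ≥ 𝓖g₂ on [0,1]. -/
import Mathlib


noncomputable def Gop (g : ℝ → ℝ) (x : ℝ) : ℝ :=
  ((x+3)/6) * g ((x+2)/3)^3
  + ((x+2)/6) * (g ((x+1)/3)^2 - g ((x+2)/3) * g ((x+1)/3)^2)

theorem stmt6 (g₁ g₂ : ℝ → ℝ)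
    (hmem₁ : ∀ x ∈ Set.Icc (0:ℝ) 1, g₁ x ∈ Set.Icc (0:ℝ) 1)
    (hmem₂ : ∀ x ∈ Set.Icc (0:ℝ) 1, g₂ x ∈ Set.Icc (0:ℝ) 1)
    (hmono₁ : MonotoneOn g₁ (Set.Icc (0:ℝ) 1))
    (hmono₂ : MonotoneOn g₂ (Set.Icc (0:ℝ) 1))
    (hle : ∀ x ∈ Set.Icc (0:ℝ) 1, g₂ x ≤ g₁ x) :
    ∀ x ∈ Set.Icc (0:ℝ) 1, Gop g₂ x ≤ Gop g₁ x := by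
  intro x hx
  obtain ⟨hx0, hx1⟩ := hx
  have hu : (x+1)/3 ∈ Set.Icc (0:ℝ) 1 := ⟨by linarith, by linarith⟩
  have hv : (x+2)/3 ∈ Set.Icc (0:ℝ) 1 := ⟨by linarith, by linarith⟩
  have huv : (x+1)/3 ≤ (x+2)/3 := by linarith
  have ha1 := hmem₁ _ hv
  have hb1 := hmem₁ _ hu
  have ha2 := hmem₂ _ hv
  have hb2 := hmem₂ _ hu
  have hba1 : g₁ ((x+1)/3) ≤ g₁ ((x+2)/3) := hmono₁ hu hv huv
  have hba2 : g₂ ((x+1)/3) ≤ g₂ ((x+2)/3) := hmono₂ hu hv huv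
  have haa : g₂ ((x+2)/3) ≤ g₁ ((x+2)/3) := hle _ hv
  have hbb : g₂ ((x+1)/3) ≤ g₁ ((x+1)/3) := hle _ hu
  obtain ⟨ha10, ha11⟩ := ha1
  obtain ⟨hb10, hb11⟩ := hb1
  obtain ⟨ha20, ha21⟩ := ha2
  obtain ⟨hb20, hb21⟩ := hb2
  set a1 := g₁ ((x+2)/3)
  set b1 := g₁ ((x+1)/3)
  set a2 := g₂ ((x+2)/3)
  set b2 := g₂ ((x+1)/3)
  unfold Gop
  have hd : (0:ℝ) ≤ a1 - a2 := by linarith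
  have hx2 : (0:ℝ) ≤ x + 2 := by linarith
  have key1 : ((x+3)/6) * a2^3 + ((x+2)/6) * (b2^2 - a2 * b2^2)
      ≤ ((x+3)/6) * a1^3 + ((x+2)/6) * (b2^2 - a1 * b2^2) := by
    nlinarith [mul_nonneg (mul_nonneg hd hx2) (mul_nonneg (sub_nonneg.2 hba2) (add_nonneg ha20 hb20)),
      mul_nonneg hd (sq_nonneg a2),
      mul_nonneg (mul_nonneg hd hx2) (add_nonneg (sq_nonneg a1) (mul_nonneg ha10 ha20)),
      mul_nonneg hd (add_nonneg (sq_nonneg a1) (mul_nonneg ha10 ha20))]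
  have key2 : ((x+3)/6) * a1^3 + ((x+2)/6) * (b2^2 - a1 * b2^2)
      ≤ ((x+3)/6) * a1^3 + ((x+2)/6) * (b1^2 - a1 * b1^2) := by
    nlinarith [mul_nonneg (sub_nonneg.2 hbb) (sub_nonneg.2 ha11),
      mul_nonneg (mul_nonneg (sub_nonneg.2 hbb) (sub_nonneg.2 ha11)) (add_nonneg hb10 hb20)]
  linarith
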